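/- The function 𝜅̃(θ) = (1/(4π))( -1/4 + (1/(2π)) · (θ - sin θ)/sin²(θ/2) ) is strictly increasing on (0, 2π). -/

import Mathlib

open Real

/- The affine prefactors are positive, so it suffices that `g θ = (θ - sin θ) / sin² (θ/2)` is
increasing. With `t = θ/2`, `s = sin t`, `c = cos t`, the double angle formulas give
`g' θ = 2 (s - t c) / s³`, which is positive on `0 < t < π` because `t cos t < sin t` there
(trivially where `cos t ≤ 0`, and from `t < tan t` where `cos t > 0`). -/

theorem Real.mul_cos_lt_sin {t : ℝ} (h0 : 0 < t) (hπ : t < π) : t * cos t < sin t := by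
  rcases le_or_gt (cos t) 0 with hc | hc
  · nlinarith [sin_pos_of_pos_of_lt_pi h0 hπ]
  · have ht : t < π / 2 := by
      by_contra! h
      linarith [cos_nonpos_of_pi_div_two_le_of_le h (by linarith [pi_pos])]
    calc t * cos t < tan t * cos t := mul_lt_mul_of_pos_right (lt_tan h0 ht) hc
      _ = sin t := by rw [tan_eq_sin_div_cos, div_mul_cancel₀ _ hc.ne']

theorem Real.hasDerivAt_sub_sin_div_sin_half_sq {θ : ℝ} (hs : sin (θ / 2) ≠ 0) :
    HasDerivAt (fun θ => (θ - sin θ) / sin (θ / 2) ^ 2)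
      (2 * (sin (θ / 2) - θ / 2 * cos (θ / 2)) / sin (θ / 2) ^ 3) θ := by
  have hsin_half : HasDerivAt (fun θ => sin (θ / 2)) (cos (θ / 2) * (1 / 2)) θ :=
    ((hasDerivAt_id' θ).div_const 2).sin
  refine (((hasDerivAt_id' θ).sub (hasDerivAt_sin θ)).div (hsin_half.pow 2)
    (pow_ne_zero 2 hs)).congr_deriv ?_
  have hθ : θ = 2 * (θ / 2) := by ring
  have hsin : sin θ = 2 * sin (θ / 2) * cos (θ / 2) := by rw [← sin_two_mul, ← hθ]
  have hcos : cos θ = 1 - 2 * sin (θ / 2) ^ 2 := by rw [← cos_two_mul_eq_one_sub, ← hθ]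
  simp only [Pi.pow_apply, Pi.sub_apply, hsin, hcos]
  field_simp
  linear_combination 4 * sin (θ / 2) ^ 2 * sin_sq_add_cos_sq (θ / 2)

theorem Real.strictMonoOn_sub_sin_div_sin_half_sq :
    StrictMonoOn (fun θ => (θ - sin θ) / sin (θ / 2) ^ 2) (Set.Ioo 0 (2 * π)) := by
  have hs : ∀ θ ∈ Set.Ioo 0 (2 * π), 0 < sin (θ / 2) := fun θ hθ =>
    sin_pos_of_pos_of_lt_pi (by linarith [hθ.1]) (by linarith [hθ.2])
  have hderiv θ (hθ : θ ∈ Set.Ioo 0 (2 * π)) := hasDerivAt_sub_sin_div_sin_half_sq (hs θ hθ).ne'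
  refine strictMonoOn_of_hasDerivWithinAt_pos (convex_Ioo _ _)
    (fun θ hθ => (hderiv θ hθ).continuousAt.continuousWithinAt)
    (fun θ hθ => (hderiv θ (interior_subset hθ)).hasDerivWithinAt) fun θ hθ => ?_
  rw [interior_Ioo] at hθ
  have hlt := mul_cos_lt_sin (t := θ / 2) (by linarith [hθ.1]) (by linarith [hθ.2])
  have hpos := hs θ hθ
  exact div_pos (by linarith) (by positivity)

/-- `𝜅̃(θ) = (1/(4π))(-1/4 + (1/(2π))(θ - sin θ)/sin²(θ/2))` is strictly increasing on `(0, 2π)`. -/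
theorem kappaTilde_strictMono :
    StrictMonoOn
      (fun θ : ℝ => (1 / (4 * π)) *
        (-1 / 4 + (1 / (2 * π)) * ((θ - Real.sin θ) / (Real.sin (θ / 2)) ^ 2)))
      (Set.Ioo (0:ℝ) (2 * π)) := by
  intro x hx y hy hxy
  have hg := strictMonoOn_sub_sin_div_sin_half_sq hx hy hxy
  have hπ := pi_pos
  dsimp only at hg ⊢
  gcongr
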